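/- arXiv:1208.6265 — 2 statements merged into one kernel-verified Lean document; each statement's English description precedes it below -/
import Mathlib

section
/- The map 𝒮 satisfies the twisted bicomodule conditions: (s ⊗ 𝒮) ∘ Δ = DL ∘ 𝒮 and (𝒮 ⊗ t) ∘ Δ = DR ∘ 𝒮 as maps H1 → H⊗H1 and H1 → H1⊗H respectively. (Part of Theorem 2.6.) -/
/-!
Fix `h`. Evaluated at `a ⊗ h`, each side of the first identity factors in the algebra
`H ⊗ (A ⊗ H)` as `F(a) · (h₁ ⊗ 1 ⊗ h₂)`, and each side of the second one in `(A ⊗ H) ⊗ H` as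
`F(a) · (1 ⊗ h₁ ⊗ h₂)`, where `F` (different on the two sides) is a convolution product of
algebra maps composed with `S` and `d`. So both identities become identities in a convolution
algebra over `A`. The second is then associativity of convolution (that is, coassociativity of
`A`) together with `Δ ∘ d = (d ⊗ d) ∘ Δ`. The first needs in addition that `S` is
anticomultiplicative and that `d(S a₁) d(a₂) = ε(a)`, since `d` is an algebra map.
-/

open TensorProduct

noncomputable section

variable (k A H : Type*) [Field k] [Ring A] [Ring H]
  [HopfAlgebra k A] [HopfAlgebra k H]

/-- `t(a⊗h) = d(a)h`. -/
def tmap (d : A →ₗ[k] H) : A ⊗[k] H →ₗ[k] H :=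
  LinearMap.mul' k H ∘ₗ map d LinearMap.id

/-- `s(a⊗h) = ε(a)h`. -/
def smap : A ⊗[k] H →ₗ[k] H :=
  (TensorProduct.lid k H).toLinearMap ∘ₗ map (Coalgebra.counit : A →ₗ[k] k) LinearMap.id

/-- `i(h) = 1⊗h`. -/
def imap : H →ₗ[k] A ⊗[k] H := TensorProduct.mk k A H 1

/-- The tensor-product coproduct `Δ(a⊗h) = (a₁⊗h₁) ⊗ (a₂⊗h₂)` on `H1 = A ⊗ H`. -/
def comul1 : A ⊗[k] H →ₗ[k] (A ⊗[k] H) ⊗[k] (A ⊗[k] H) :=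
  (tensorTensorTensorComm k A A H H).toLinearMap ∘ₗ
    map (Coalgebra.comul : A →ₗ[k] A ⊗[k] A) (Coalgebra.comul : H →ₗ[k] H ⊗[k] H)

/-- The tensor-product counit `ε(a⊗h) = ε(a)ε(h)` on `H1 = A ⊗ H`. -/
def counit1 : A ⊗[k] H →ₗ[k] k :=
  (TensorProduct.lid k k).toLinearMap ∘ₗ
    map (Coalgebra.counit : A →ₗ[k] k) (Coalgebra.counit : H →ₗ[k] k)

/-- The left coaction `DL = (t⊗id)Δ`. -/
def DLmap (d : A →ₗ[k] H) : A ⊗[k] H →ₗ[k] H ⊗[k] (A ⊗[k] H) :=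
  map (tmap k A H d) LinearMap.id ∘ₗ comul1 k A H

/-- The right coaction `DR = (id⊗s)Δ`. -/
def DRmap : A ⊗[k] H →ₗ[k] (A ⊗[k] H) ⊗[k] H :=
  map LinearMap.id (smap k A H) ∘ₗ comul1 k A H

/-- The second product `(a⊗h)∘(b⊗g) = ε(h) ab ⊗ g`. -/
def circ : (A ⊗[k] H) ⊗[k] (A ⊗[k] H) →ₗ[k] A ⊗[k] H :=
  map (LinearMap.mul' k A)
      ((TensorProduct.lid k H).toLinearMap ∘ₗ map (Coalgebra.counit : H →ₗ[k] k) LinearMap.id)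
    ∘ₗ (tensorTensorTensorComm k A H A H).toLinearMap

/-- The quantum groupoid antipode `𝒮(a⊗h) = S(a₁) ⊗ d(a₂)h`. -/
def SS (d : A →ₗ[k] H) : A ⊗[k] H →ₗ[k] A ⊗[k] H :=
  map (HopfAlgebra.antipode (R := k) : A →ₗ[k] A) (tmap k A H d)
    ∘ₗ (TensorProduct.assoc k A A H).toLinearMap
    ∘ₗ map (Coalgebra.comul : A →ₗ[k] A ⊗[k] A) LinearMap.id

/-- The smash product multiplication `(a⊗h)(b⊗g) = a(h₁▷b) ⊗ h₂g`. -/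
def smashMul (act : H ⊗[k] A →ₗ[k] A) :
    (A ⊗[k] H) ⊗[k] (A ⊗[k] H) →ₗ[k] A ⊗[k] H :=
  map (LinearMap.mul' k A) LinearMap.id
  ∘ₗ (TensorProduct.assoc k A A H).symm.toLinearMap
  ∘ₗ map LinearMap.id
      (map act (LinearMap.mul' k H)
        ∘ₗ (tensorTensorTensorComm k H H A H).toLinearMap)
  ∘ₗ (TensorProduct.assoc k A (H ⊗[k] H) (A ⊗[k] H)).toLinearMap
  ∘ₗ map (map LinearMap.id (Coalgebra.comul : H →ₗ[k] H ⊗[k] H)) LinearMap.id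

/-- The cotensor product `H1□H1`. -/
def cot (d : A →ₗ[k] H) : Set ((A ⊗[k] H) ⊗[k] (A ⊗[k] H)) :=
  {x | (TensorProduct.assoc k (A ⊗[k] H) H (A ⊗[k] H)).toLinearMap
        (map (DRmap k A H) LinearMap.id x) = map LinearMap.id (DLmap k A H d) x}

/-- A Hopf (algebra) crossed module. -/
structure HopfCrossedModule (act : H ⊗[k] A →ₗ[k] A) (d : A →ₗ[k] H) : Prop where
  /-- `(hg)▷a = h▷(g▷a)` -/
  act_mul : ∀ (h g : H) (a : A), act ((h * g) ⊗ₜ[k] a) = act (h ⊗ₜ[k] act (g ⊗ₜ[k] a))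
  /-- `1▷a = a` -/
  act_one : ∀ a : A, act ((1 : H) ⊗ₜ[k] a) = a
  /-- `h▷(ab) = (h₁▷a)(h₂▷b)` -/
  act_mul_alg : act ∘ₗ map LinearMap.id (LinearMap.mul' k A)
      = LinearMap.mul' k A ∘ₗ map act act
          ∘ₗ (tensorTensorTensorComm k H H A A).toLinearMap
          ∘ₗ map (Coalgebra.comul : H →ₗ[k] H ⊗[k] H) LinearMap.id
  /-- `h▷1 = ε(h)1` -/
  act_unit : ∀ h : H, act (h ⊗ₜ[k] (1 : A)) = (Coalgebra.counit h : k) • (1 : A)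
  /-- `Δ(h▷a) = (h₁▷a₁)⊗(h₂▷a₂)` -/
  act_comul : (Coalgebra.comul : A →ₗ[k] A ⊗[k] A) ∘ₗ act
      = map act act ∘ₗ (tensorTensorTensorComm k H H A A).toLinearMap
          ∘ₗ map (Coalgebra.comul : H →ₗ[k] H ⊗[k] H) (Coalgebra.comul : A →ₗ[k] A ⊗[k] A)
  /-- `ε(h▷a) = ε(h)ε(a)` -/
  act_counit : ∀ (h : H) (a : A),
      (Coalgebra.counit (act (h ⊗ₜ[k] a)) : k) = Coalgebra.counit h * Coalgebra.counit a
  /-- `h₁ ⊗ (h₂▷a) = h₂ ⊗ (h₁▷a)` -/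
  act_cocomm : map LinearMap.id act ∘ₗ (TensorProduct.assoc k H H A).toLinearMap
        ∘ₗ map (Coalgebra.comul : H →ₗ[k] H ⊗[k] H) LinearMap.id
      = map LinearMap.id act ∘ₗ (TensorProduct.assoc k H H A).toLinearMap
        ∘ₗ map ((TensorProduct.comm k H H).toLinearMap
              ∘ₗ (Coalgebra.comul : H →ₗ[k] H ⊗[k] H)) LinearMap.id
  /-- `d` is multiplicative -/
  d_mul : ∀ a b : A, d (a * b) = d a * d b
  /-- `d(1) = 1` -/
  d_one : d 1 = 1
  /-- `d` is comultiplicative -/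
  d_comul : (Coalgebra.comul : H →ₗ[k] H ⊗[k] H) ∘ₗ d
      = map d d ∘ₗ (Coalgebra.comul : A →ₗ[k] A ⊗[k] A)
  /-- `ε∘d = ε` -/
  d_counit : (Coalgebra.counit : H →ₗ[k] k) ∘ₗ d = (Coalgebra.counit : A →ₗ[k] k)
  /-- `d(h▷a) = h₁ d(a) S(h₂)` -/
  d_act : d ∘ₗ act = LinearMap.mul' k H
      ∘ₗ map LinearMap.id (LinearMap.mul' k H
            ∘ₗ map LinearMap.id (HopfAlgebra.antipode (R := k) : H →ₗ[k] H)
            ∘ₗ (TensorProduct.comm k H H).toLinearMap)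
      ∘ₗ (TensorProduct.assoc k H H H).toLinearMap
      ∘ₗ map (Coalgebra.comul : H →ₗ[k] H ⊗[k] H) d
  /-- `d(a)▷b = a₁ b S(a₂)` -/
  crossed : act ∘ₗ map d LinearMap.id = LinearMap.mul' k A
      ∘ₗ map LinearMap.id (LinearMap.mul' k A
            ∘ₗ map LinearMap.id (HopfAlgebra.antipode (R := k) : A →ₗ[k] A)
            ∘ₗ (TensorProduct.comm k A A).toLinearMap)
      ∘ₗ (TensorProduct.assoc k A A A).toLinearMap
      ∘ₗ map (Coalgebra.comul : A →ₗ[k] A ⊗[k] A) LinearMap.id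

open Coalgebra HopfAlgebra WithConv

lemma Coalgebra.sum_counit_smul_map {R C M : Type*} [CommSemiring R] [AddCommMonoid C]
    [Module R C] [Coalgebra R C] [AddCommMonoid M] [Module R M] {a : C} {ι : Type*}
    (𝓡 : Repr R a ι) (f : C →ₗ[R] M) :
    ∑ i ∈ 𝓡.index, counit (R := R) (𝓡.left i) • f (𝓡.right i) = f a := by
  simpa [map_sum] using congr(f $(sum_counit_smul 𝓡))

lemma Coalgebra.sum_counit_right_smul {R C : Type*} [CommSemiring R] [AddCommMonoid C]
    [Module R C] [Coalgebra R C] {a : C} {ι : Type*} (𝓡 : Repr R a ι) :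
    ∑ i ∈ 𝓡.index, counit (R := R) (𝓡.right i) • 𝓡.left i = a := by
  simpa only [map_sum, _root_.TensorProduct.rid_tmul, LinearEquiv.coe_coe, one_smul] using
    congr(_root_.TensorProduct.rid R C $(sum_tmul_counit_eq 𝓡))

namespace HopfAlgebra

variable {R C B : Type*} [CommSemiring R] [Semiring C] [HopfAlgebra R C]
  [Semiring B] [Algebra R B]

lemma algHom_comp_antipode_convMul (f : C →ₐ[R] B) :
    toConv (f.toLinearMap ∘ₗ antipode R) * toConv f.toLinearMap = 1 := by
  ext a
  simp [(ℛ R a).convMul_apply, ← map_mul, ← map_sum, sum_antipode_mul_eq_algebraMap_counit]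

open Algebra.TensorProduct (includeLeft includeRight) in
theorem comul_comp_antipode :
    comul ∘ₗ antipode R = map (antipode R) (antipode R) ∘ₗ
      (TensorProduct.comm R C C).toLinearMap ∘ₗ (comul : C →ₗ[R] C ⊗[R] C) := by
  let iL : C →ₐ[R] C ⊗[R] C := includeLeft
  let iR : C →ₐ[R] C ⊗[R] C := includeRight
  have hcomul : toConv (comul : C →ₗ[R] C ⊗[R] C) =
      toConv iL.toLinearMap * toConv iR.toLinearMap := by
    ext a
    simp [(ℛ R a).convMul_apply, iL, iR, ← (ℛ R a).eq]
  have hflip : toConv (map (antipode R) (antipode R) ∘ₗ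
      (TensorProduct.comm R C C).toLinearMap ∘ₗ (comul : C →ₗ[R] C ⊗[R] C)) =
      toConv (iR.toLinearMap ∘ₗ antipode R) * toConv (iL.toLinearMap ∘ₗ antipode R) := by
    ext a
    simp [(ℛ R a).convMul_apply, iL, iR, ← (ℛ R a).eq, map_sum]
  -- both sides are convolution inverses of `Δ`
  refine toConv_injective (left_inv_eq_right_inv (M := WithConv (C →ₗ[R] C ⊗[R] C))
    (a := toConv comul) ?_ LinearMap.comul_right_inv).symm
  rw [hflip, hcomul, mul_assoc, ← mul_assoc (toConv (iL.toLinearMap ∘ₗ antipode R)),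
    algHom_comp_antipode_convMul, one_mul, algHom_comp_antipode_convMul]

lemma convMul_comp_antipode_of_commute (f g : C →ₗ[R] B) (hfg : ∀ x y, Commute (f x) (g y)) :
    toConv ((toConv f * toConv g).ofConv ∘ₗ antipode R) =
      toConv (g ∘ₗ antipode R) * toConv (f ∘ₗ antipode R) := by
  ext a
  have hS := LinearMap.congr_fun (comul_comp_antipode (R := R) (C := C)) a
  simp only [LinearMap.comp_apply, LinearEquiv.coe_coe] at hS
  simp [LinearMap.convMul_apply, hS, ← (ℛ R a).eq, map_sum, (ℛ R a).convMul_apply,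
    (hfg _ _).eq]

end HopfAlgebra

variable {k A H}

lemma comul1_tmul (a : A) (h : H) :
    comul1 k A H (a ⊗ₜ h) = ∑ i ∈ (ℛ k a).index, ∑ p ∈ (ℛ k h).index,
      ((ℛ k a).left i ⊗ₜ (ℛ k h).left p) ⊗ₜ ((ℛ k a).right i ⊗ₜ (ℛ k h).right p) := by
  simp [comul1, ← (ℛ k a).eq, ← (ℛ k h).eq, sum_tmul, tmul_sum]
  exact Finset.sum_comm

lemma smap_tmul (x : A) (y : H) : smap k A H (x ⊗ₜ y) = counit (R := k) x • y := by
  simp [smap]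

lemma SS_tmul (d : A →ₗ[k] H) (a : A) (h : H) :
    SS k A H d (a ⊗ₜ h) =
      ∑ i ∈ (ℛ k a).index, antipode k ((ℛ k a).left i) ⊗ₜ (d ((ℛ k a).right i) * h) := by
  simp [SS, tmap, ← (ℛ k a).eq, sum_tmul]

section DRmap

open Algebra.TensorProduct (includeLeft includeRight)

variable (k A H) in
def comulH₂₃ : H →ₐ[k] (A ⊗[k] H) ⊗[k] H :=
  (Algebra.TensorProduct.map includeRight (AlgHom.id k H)).comp (Bialgebra.comulAlgHom k H)

lemma comulH₂₃_apply (y : H) :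
    comulH₂₃ k A H y = ∑ p ∈ (ℛ k y).index, ((1 : A) ⊗ₜ (ℛ k y).left p) ⊗ₜ (ℛ k y).right p := by
  simp [comulH₂₃, ← (ℛ k y).eq, map_sum]

local notation "B₂" => (A ⊗[k] H) ⊗[k] H
local notation "ι₁" => AlgHom.toLinearMap (includeLeft.comp includeLeft : A →ₐ[k] B₂)
local notation "ι₂" => AlgHom.toLinearMap (includeLeft.comp includeRight : H →ₐ[k] B₂)
local notation "ι₃" => AlgHom.toLinearMap (includeRight : H →ₐ[k] B₂)

lemma DRmap_tmul (x : A) (y : H) : DRmap k A H (x ⊗ₜ y) = ι₁ x * comulH₂₃ k A H y := by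
  simp [DRmap, comul1_tmul, smap, tmul_smul, comulH₂₃_apply, Finset.mul_sum]
  rw [Finset.sum_comm]
  simp only [smul_tmul', ← sum_tmul, Coalgebra.sum_counit_right_smul]

lemma comulH₂₃_comp_eq_convMul {d : A →ₗ[k] H} (hd : comul ∘ₗ d = map d d ∘ₗ comul) :
    toConv ((comulH₂₃ k A H).toLinearMap ∘ₗ d) = toConv (ι₂ ∘ₗ d) * toConv (ι₃ ∘ₗ d) := by
  ext a
  have hda := LinearMap.congr_fun hd a
  simp only [LinearMap.comp_apply] at hda
  simp [(ℛ k a).convMul_apply, comulH₂₃, hda, ← (ℛ k a).eq, map_sum]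

lemma DRmap_SS_tmul (d : A →ₗ[k] H) (a : A) (h : H) :
    DRmap k A H (SS k A H d (a ⊗ₜ h)) =
      (toConv (ι₁ ∘ₗ antipode k) * toConv ((comulH₂₃ k A H).toLinearMap ∘ₗ d)) a *
        comulH₂₃ k A H h := by
  simp [SS_tmul, DRmap_tmul, (ℛ k a).convMul_apply, Finset.sum_mul, mul_assoc]

lemma map_SS_tmap_comul1_tmul (d : A →ₗ[k] H) (a : A) (h : H) :
    map (SS k A H d) (tmap k A H d) (comul1 k A H (a ⊗ₜ h)) =
      (toConv (ι₁ ∘ₗ antipode k) * toConv (ι₂ ∘ₗ d) * toConv (ι₃ ∘ₗ d)) a *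
        comulH₂₃ k A H h := by
  simp [comul1_tmul, SS_tmul, tmap, (ℛ k a).convMul_apply, (ℛ k _).convMul_apply,
    Finset.sum_mul, Finset.mul_sum, comulH₂₃_apply, sum_tmul]
  exact Finset.sum_comm

theorem map_SS_tmap_comp_comul1 {d : A →ₗ[k] H} (hd : comul ∘ₗ d = map d d ∘ₗ comul) :
    map (SS k A H d) (tmap k A H d) ∘ₗ comul1 k A H = DRmap k A H ∘ₗ SS k A H d := by
  refine TensorProduct.ext' fun a h => ?_
  rw [LinearMap.comp_apply, LinearMap.comp_apply, map_SS_tmap_comul1_tmul, DRmap_SS_tmul,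
    comulH₂₃_comp_eq_convMul hd, mul_assoc]

end DRmap

section DLmap

open Algebra.TensorProduct (includeLeft includeRight)

variable (k A H) in
def comulH₁₃ : H →ₐ[k] H ⊗[k] (A ⊗[k] H) :=
  (Algebra.TensorProduct.map (AlgHom.id k H) includeRight).comp (Bialgebra.comulAlgHom k H)

lemma comulH₁₃_apply (y : H) :
    comulH₁₃ k A H y = ∑ p ∈ (ℛ k y).index, (ℛ k y).left p ⊗ₜ ((1 : A) ⊗ₜ (ℛ k y).right p) := by
  simp [comulH₁₃, ← (ℛ k y).eq, map_sum]

local notation "B₁" => H ⊗[k] (A ⊗[k] H)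
local notation "κ₁" => AlgHom.toLinearMap (includeLeft : H →ₐ[k] B₁)
local notation "κ₂" => AlgHom.toLinearMap (includeRight.comp includeLeft : A →ₐ[k] B₁)
local notation "κ₃" => AlgHom.toLinearMap (includeRight.comp includeRight : H →ₐ[k] B₁)

lemma DLmap_tmul (d : A →ₗ[k] H) (x : A) (y : H) :
    DLmap k A H d (x ⊗ₜ y) = (toConv (κ₁ ∘ₗ d) * toConv κ₂) x * comulH₁₃ k A H y := by
  simp [DLmap, comul1_tmul, tmap, comulH₁₃_apply, (ℛ k x).convMul_apply, Finset.mul_sum,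
    Finset.sum_mul]
  exact Finset.sum_comm

lemma comulH₁₃_comp_eq_convMul {d : A →ₗ[k] H} (hd : comul ∘ₗ d = map d d ∘ₗ comul) :
    toConv ((comulH₁₃ k A H).toLinearMap ∘ₗ d) = toConv (κ₁ ∘ₗ d) * toConv (κ₃ ∘ₗ d) := by
  ext a
  have hda := LinearMap.congr_fun hd a
  simp only [LinearMap.comp_apply] at hda
  simp [(ℛ k a).convMul_apply, comulH₁₃, hda, ← (ℛ k a).eq, map_sum]

lemma DLmap_SS_tmul (d : A →ₗ[k] H) (a : A) (h : H) :
    DLmap k A H d (SS k A H d (a ⊗ₜ h)) =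
      (toConv (κ₂ ∘ₗ antipode k) * toConv ((κ₁ ∘ₗ d) ∘ₗ antipode k) *
        toConv ((comulH₁₃ k A H).toLinearMap ∘ₗ d)) a * comulH₁₃ k A H h := by
  rw [← convMul_comp_antipode_of_commute (κ₁ ∘ₗ d) κ₂
    (fun _ _ => (Commute.one_right _).tmul (Commute.one_left _))]
  simp only [SS_tmul, map_sum, DLmap_tmul, (ℛ k a).convMul_apply, Finset.sum_mul, map_mul,
    mul_assoc, LinearMap.comp_apply, AlgHom.toLinearMap_apply]

lemma map_smap_SS_comul1_tmul (d : A →ₗ[k] H) (a : A) (h : H) :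
    map (smap k A H) (SS k A H d) (comul1 k A H (a ⊗ₜ h)) =
      (toConv (κ₂ ∘ₗ antipode k) * toConv (κ₃ ∘ₗ d)) a * comulH₁₃ k A H h := by
  have hcounit (y z : H) : ∑ i ∈ (ℛ k a).index,
      (counit (R := k) ((ℛ k a).left i) • y) ⊗ₜ[k] SS k A H d ((ℛ k a).right i ⊗ₜ z) =
      y ⊗ₜ[k] SS k A H d (a ⊗ₜ z) := by
    simp only [← smul_tmul']
    exact Coalgebra.sum_counit_smul_map (ℛ k a)
      (TensorProduct.mk k H (A ⊗[k] H) y ∘ₗ SS k A H d ∘ₗ (TensorProduct.mk k A H).flip z)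
  simp only [comul1_tmul, map_sum, map_tmul, smap_tmul]
  rw [Finset.sum_comm]
  simp only [hcounit]
  simp [SS_tmul, comulH₁₃_apply, (ℛ k a).convMul_apply, Finset.sum_mul, Finset.mul_sum, tmul_sum]

theorem map_smap_SS_comp_comul1 {d : A →ₗ[k] H} (hmul : ∀ a b, d (a * b) = d a * d b)
    (hone : d 1 = 1) (hd : comul ∘ₗ d = map d d ∘ₗ comul) :
    map (smap k A H) (SS k A H d) ∘ₗ comul1 k A H = DLmap k A H d ∘ₗ SS k A H d := by
  have hdS : toConv ((κ₁ ∘ₗ d) ∘ₗ antipode k) * toConv (κ₁ ∘ₗ d) = 1 :=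
    algHom_comp_antipode_convMul (includeLeft.comp (AlgHom.ofLinearMap d hone hmul))
  have hconv : toConv (κ₂ ∘ₗ antipode k) * toConv ((κ₁ ∘ₗ d) ∘ₗ antipode k) *
      toConv ((comulH₁₃ k A H).toLinearMap ∘ₗ d) =
      toConv (κ₂ ∘ₗ antipode k) * toConv (κ₃ ∘ₗ d) := by
    rw [comulH₁₃_comp_eq_convMul hd, ← mul_assoc, mul_assoc _ _ (toConv (κ₁ ∘ₗ d)), hdS,
      mul_one]
  refine TensorProduct.ext' fun a h => ?_
  rw [LinearMap.comp_apply, LinearMap.comp_apply, map_smap_SS_comul1_tmul, DLmap_SS_tmul,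
    hconv]

end DLmap

/-- Theorem 2.6 (part): the twisted bicomodule conditions `(s⊗𝒮)Δ = DL∘𝒮` and
`(𝒮⊗t)Δ = DR∘𝒮`. -/
theorem statement7 (act : H ⊗[k] A →ₗ[k] A) (d : A →ₗ[k] H)
    (hcm : HopfCrossedModule k A H act d) :
    map (smap k A H) (SS k A H d) ∘ₗ comul1 k A H = DLmap k A H d ∘ₗ SS k A H d
    ∧ map (SS k A H d) (tmap k A H d) ∘ₗ comul1 k A H = DRmap k A H ∘ₗ SS k A H d :=
  ⟨map_smap_SS_comp_comul1 hcm.d_mul hcm.d_one hcm.d_comul, map_SS_tmap_comp_comul1 hcm.d_comul⟩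

end
end

section
/- The map 𝒮 satisfies the quantum-groupoid antipode conditions: ∘ ∘ (𝒮 ⊗ id) ∘ Δ = i ∘ s and ∘ ∘ (id ⊗ 𝒮) ∘ Δ = i ∘ t; explicitly, 𝒮(a_(1)⊗h_(1))∘(a_(2)⊗h_(2)) = ε(a)(1⊗h) and (a_(1)⊗h_(1))∘𝒮(a_(2)⊗h_(2)) = 1⊗d(a)h for all a ∈ A, h ∈ H. (Part of Theorem 2.6.) -/
open TensorProduct

noncomputable section

variable (k A H : Type*) [Field k] [Ring A] [Ring H]
  [HopfAlgebra k A] [HopfAlgebra k H]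

/-!
The second product kills the `H`-leg of its left factor through `ε`. In
`𝒮(a₁ ⊗ h₁) ∘ (a₂ ⊗ h₂) = S(a₁₁) a₂ ⊗ ε(d(a₁₂) h₁) h₂` the condition `ε ∘ d = ε` lets `ε` swallow
`a₁₂` and `h₁`, leaving `S(a₁) a₂ ⊗ h = ε(a) 1 ⊗ h`. In
`(a₁ ⊗ h₁) ∘ 𝒮(a₂ ⊗ h₂) = ε(h₁) a₁ S(a₂₁) ⊗ d(a₂₂) h₂` the factor `ε(h₁)` is absorbed into `h`,
and coassociativity turns `a₁ S(a₂) ⊗ d(a₃) h` into `1 ⊗ d(a) h`.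
-/

open Coalgebra HopfAlgebra

section Sweedler

variable {R B M : Type*} [CommSemiring R] [AddCommMonoid M] [Module R M]

theorem Coalgebra.sum_counit_right_smul_map [AddCommMonoid B] [Module R B] [Coalgebra R B]
    {a : B} {ι : Type*} (r : Repr R a ι) (f : B →ₗ[R] M) :
    ∑ i ∈ r.index, counit (R := R) (r.right i) • f (r.left i) = f a := by
  simpa only [map_sum, _root_.TensorProduct.rid_tmul, one_smul] using
    congr_arg (_root_.TensorProduct.rid R M) (sum_map_tmul_counit_eq (repr := r) f a)

/-- `a₁ S(a₂) ⊗ f(a₃) = 1 ⊗ f(a)`. -/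
theorem HopfAlgebra.sum_mul_antipode_tmul_eq [Semiring B] [HopfAlgebra R B] {a : B} {ι : Type*}
    {κ : ι → Type*} (r : Repr R a ι) (s : (i : ι) → Repr R (r.right i) (κ i))
    (f : B →ₗ[R] M) :
    ∑ i ∈ r.index, ∑ l ∈ (s i).index,
        (r.left i * antipode R ((s i).left l)) ⊗ₜ[R] f ((s i).right l) = (1 : B) ⊗ₜ[R] f a := by
  let mulAntipodeMap : B ⊗[R] (B ⊗[R] B) →ₗ[R] B ⊗[R] M :=
    map (LinearMap.mul' R B) f ∘ₗ (TensorProduct.assoc R B B B).symm.toLinearMap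
      ∘ₗ map LinearMap.id (map (antipode R) LinearMap.id)
  have coassoc := congr(mulAntipodeMap $(sum_tmul_tmul_eq r (fun i ↦ ℛ R (r.left i)) s))
  simp only [mulAntipodeMap, map_sum, LinearMap.comp_apply, map_tmul, LinearEquiv.coe_coe,
    LinearMap.id_coe, id_eq, assoc_symm_tmul, LinearMap.mul'_apply] at coassoc
  rw [← coassoc]
  simp only [← sum_tmul, sum_mul_antipode_eq_smul, smul_tmul, ← map_smul]
  rw [← tmul_sum, ← map_sum, sum_counit_smul]

end Sweedler

section SmashProduct

variable {k A H}

theorem circ_tmul (p b : A) (q g : H) :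
    circ k A H ((p ⊗ₜ[k] q) ⊗ₜ[k] (b ⊗ₜ[k] g))
      = (p * b) ⊗ₜ[k] (counit (R := k) q • g) := by
  simp [circ, tensorTensorTensorComm_tmul, LinearMap.mul'_apply]

theorem SS_tmul_s8 (d : A →ₗ[k] H) {x : A} {ι : Type*} (r : Repr k x ι) (u : H) :
    SS k A H d (x ⊗ₜ[k] u)
      = ∑ l ∈ r.index, antipode k (r.left l) ⊗ₜ[k] (d (r.right l) * u) := by
  simp [SS, ← r.eq, sum_tmul, tmap, LinearMap.mul'_apply]

theorem comul1_tmul_s8 {a : A} {h : H} {ι κ : Type*} (ra : Repr k a ι) (rh : Repr k h κ) :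
    comul1 k A H (a ⊗ₜ[k] h)
      = ∑ i ∈ ra.index, ∑ j ∈ rh.index,
          (ra.left i ⊗ₜ[k] rh.left j) ⊗ₜ[k] (ra.right i ⊗ₜ[k] rh.right j) := by
  simp only [comul1, ← ra.eq, ← rh.eq, LinearMap.comp_apply, map_tmul, LinearEquiv.coe_coe,
    sum_tmul, tmul_sum, map_sum, tensorTensorTensorComm_tmul]
  exact Finset.sum_comm

theorem circ_SS_tmul_tmul {d : A →ₗ[k] H} (hd : counit ∘ₗ d = counit) (x b : A) (u g : H) :
    circ k A H (SS k A H d (x ⊗ₜ[k] u) ⊗ₜ[k] (b ⊗ₜ[k] g))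
      = (antipode k x * b) ⊗ₜ[k] (counit (R := k) u • g) := by
  have counit_d (y : A) : counit (R := k) (d y) = counit y := LinearMap.congr_fun hd y
  rw [SS_tmul_s8 d (ℛ k x), sum_tmul, map_sum]
  simp only [circ_tmul, Bialgebra.counit_mul, counit_d, mul_smul]
  rw [Finset.sum_congr rfl fun l _ ↦ (smul_tmul _ _ _).symm, ← sum_tmul]
  congr 1
  exact Coalgebra.sum_counit_right_smul_map _ (LinearMap.mulRight k b ∘ₗ antipode k)

theorem circ_tmul_SS_tmul (d : A →ₗ[k] H) {x : A} {ι : Type*} (r : Repr k x ι)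
    (p : A) (q u : H) :
    circ k A H ((p ⊗ₜ[k] q) ⊗ₜ[k] SS k A H d (x ⊗ₜ[k] u))
      = ∑ l ∈ r.index,
          (p * antipode k (r.left l)) ⊗ₜ[k] (d (r.right l) * counit (R := k) q • u) := by
  simp only [SS_tmul_s8 d r, tmul_sum, map_sum, circ_tmul, mul_smul_comm]

theorem circ_SS_rTensor_comul1 {d : A →ₗ[k] H} (hd : counit ∘ₗ d = counit) :
    circ k A H ∘ₗ map (SS k A H d) LinearMap.id ∘ₗ comul1 k A H
      = imap k A H ∘ₗ smap k A H := by
  refine TensorProduct.ext' fun a h ↦ ?_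
  simp only [LinearMap.comp_apply, comul1_tmul_s8 (ℛ k a) (ℛ k h), map_sum, map_tmul,
    LinearMap.id_coe, id_eq, circ_SS_tmul_tmul hd]
  rw [Finset.sum_congr rfl fun i _ ↦ (tmul_sum _ _ _).symm, ← sum_tmul, sum_counit_smul,
    sum_antipode_mul_eq_smul]
  simp [imap, smap, smul_tmul]

theorem circ_SS_lTensor_comul1 (d : A →ₗ[k] H) :
    circ k A H ∘ₗ map LinearMap.id (SS k A H d) ∘ₗ comul1 k A H
      = imap k A H ∘ₗ tmap k A H d := by
  refine TensorProduct.ext' fun a h ↦ ?_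
  simp only [LinearMap.comp_apply, comul1_tmul_s8 (ℛ k a) (ℛ k h), map_sum, map_tmul,
    LinearMap.id_coe, id_eq, circ_tmul_SS_tmul d (ℛ k _)]
  rw [Finset.sum_congr rfl fun i _ ↦ Finset.sum_comm]
  simp only [← tmul_sum, ← Finset.mul_sum, sum_counit_smul]
  simpa [imap, tmap, LinearMap.mul'_apply] using
    sum_mul_antipode_tmul_eq (ℛ k a) (fun i ↦ ℛ k _) (LinearMap.mulRight k h ∘ₗ d)

end SmashProduct

/-- Theorem 2.6 (part): the quantum-groupoid antipode conditions
`∘(𝒮⊗id)Δ = i∘s` and `∘(id⊗𝒮)Δ = i∘t`. -/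
theorem statement8 (act : H ⊗[k] A →ₗ[k] A) (d : A →ₗ[k] H)
    (hcm : HopfCrossedModule k A H act d) :
    circ k A H ∘ₗ map (SS k A H d) LinearMap.id ∘ₗ comul1 k A H = imap k A H ∘ₗ smap k A H
    ∧ circ k A H ∘ₗ map LinearMap.id (SS k A H d) ∘ₗ comul1 k A H
        = imap k A H ∘ₗ tmap k A H d :=
  ⟨circ_SS_rTensor_comul1 hcm.d_counit, circ_SS_lTensor_comul1 d⟩

end
end
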